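/- arXiv:2503.07578 — 5 statements merged into one kernel-verified Lean document; each statement's English description precedes it below -/
import Mathlib

section
/- Let d, r be positive integers with r < d, let E be a d × r real matrix with orthonormal columns (Eᵀ E = I_r), and let Σ be an r × r symmetric positive definite real matrix. Then the set of maximizers of the function U ↦ tr(E Eᵀ U Σ Uᵀ) over the set {U ∈ ℝ^{d×r} : Uᵀ U = I_r} is exactly {E Q : Q an r × r orthogonal matrix}. -/
/-!
For `Wᵀ W = 1` let `X = W - E Eᵀ W` be the part of `W` orthogonal to the
column space of `E`. Since `Xᵀ X = 1 - (Eᵀ W)ᵀ (Eᵀ W)`, the objective equals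
`tr Σ - tr (X Σ Xᵀ)`, and `tr (X Σ Xᵀ) ≥ 0` with equality iff `X = 0` because `Σ` is positive
definite. So the maximum `tr Σ` is attained exactly when `W = E (Eᵀ W)`, and then `Q = Eᵀ W` is
orthogonal.
-/

open Matrix

namespace Matrix

variable {m n k : Type*} [Fintype n]

lemma PosDef.mul_mul_transpose_eq_zero_iff {S : Matrix n n ℝ} (hS : S.PosDef)
    {X : Matrix m n ℝ} : X * S * Xᵀ = 0 ↔ X = 0 := by
  refine ⟨fun h => funext fun i => ?_, fun h => by simp [h]⟩
  by_contra hXi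
  have hdiag : (X * S * Xᵀ) i i = X i ⬝ᵥ S *ᵥ X i := by
    rw [Matrix.mul_assoc]
    simp [mul_apply, dotProduct, mulVec, Finset.mul_sum, mul_left_comm]
  simpa [h, ← hdiag] using hS.dotProduct_mulVec_pos hXi

variable [Fintype m]

lemma PosDef.trace_mul_mul_transpose_nonneg {S : Matrix n n ℝ} (hS : S.PosDef)
    (X : Matrix m n ℝ) : 0 ≤ (X * S * Xᵀ).trace := by
  simpa using (hS.posSemidef.mul_mul_conjTranspose_same X).trace_nonneg

lemma PosDef.trace_mul_mul_transpose_eq_zero_iff {S : Matrix n n ℝ} (hS : S.PosDef)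
    {X : Matrix m n ℝ} : (X * S * Xᵀ).trace = 0 ↔ X = 0 := by
  rw [← hS.mul_mul_transpose_eq_zero_iff]
  simpa using (hS.posSemidef.mul_mul_conjTranspose_same X).trace_eq_zero_iff

variable [DecidableEq n] {E : Matrix m n ℝ}

lemma transpose_mul_self_sub_proj (hE : Eᵀ * E = 1) (W : Matrix m k ℝ) :
    (W - E * (Eᵀ * W))ᵀ * (W - E * (Eᵀ * W)) = Wᵀ * W - (Eᵀ * W)ᵀ * (Eᵀ * W) := by
  have hEEW : Eᵀ * (E * (Eᵀ * W)) = Eᵀ * W := by rw [← Matrix.mul_assoc, hE, Matrix.one_mul]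
  simp only [transpose_sub, transpose_mul, transpose_transpose, Matrix.sub_mul, Matrix.mul_sub,
    Matrix.mul_assoc, hEEW]
  abel

lemma trace_proj_mul_eq_sub [Fintype k] [DecidableEq k] (hE : Eᵀ * E = 1) {W : Matrix m k ℝ}
    (hW : Wᵀ * W = 1) (S : Matrix k k ℝ) :
    (E * Eᵀ * W * S * Wᵀ).trace =
      S.trace - ((W - E * (Eᵀ * W)) * S * (W - E * (Eᵀ * W))ᵀ).trace := by
  set X := W - E * (Eᵀ * W)
  calc (E * Eᵀ * W * S * Wᵀ).trace = (S * ((Eᵀ * W)ᵀ * (Eᵀ * W))).trace := by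
        rw [trace_mul_comm (E * Eᵀ * W * S) Wᵀ, trace_mul_comm S]
        simp only [transpose_mul, transpose_transpose, Matrix.mul_assoc]
    _ = (S * (1 - Xᵀ * X)).trace := by
        rw [transpose_mul_self_sub_proj hE, hW, sub_sub_cancel]
    _ = S.trace - (X * S * Xᵀ).trace := by
        rw [Matrix.mul_sub, Matrix.mul_one, trace_sub, ← Matrix.mul_assoc, trace_mul_comm,
          Matrix.mul_assoc]

end Matrix

theorem maximizers_pca_like_general {d r : ℕ}
    (E : Matrix (Fin d) (Fin r) ℝ) (hE : Eᵀ * E = 1)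
    (S : Matrix (Fin r) (Fin r) ℝ) (hS : S.PosDef) :
    {U : Matrix (Fin d) (Fin r) ℝ | Uᵀ * U = 1 ∧
        ∀ W : Matrix (Fin d) (Fin r) ℝ, Wᵀ * W = 1 →
          (E * Eᵀ * W * S * Wᵀ).trace ≤ (E * Eᵀ * U * S * Uᵀ).trace} =
      {U : Matrix (Fin d) (Fin r) ℝ |
        ∃ Q : Matrix (Fin r) (Fin r) ℝ, Qᵀ * Q = 1 ∧ U = E * Q} := by
  have hvalue_le {W : Matrix (Fin d) (Fin r) ℝ} (hW : Wᵀ * W = 1) :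
      (E * Eᵀ * W * S * Wᵀ).trace ≤ S.trace := by
    rw [trace_proj_mul_eq_sub hE hW]
    exact sub_le_self _ (hS.trace_mul_mul_transpose_nonneg _)
  ext U
  constructor
  · rintro ⟨hU, hmax⟩
    have hEE : E - E * (Eᵀ * E) = 0 := by rw [hE, Matrix.mul_one, sub_self]
    have hres : U - E * (Eᵀ * U) = 0 := by
      have hmaxE := hmax E hE
      rw [trace_proj_mul_eq_sub hE hE, trace_proj_mul_eq_sub hE hU, hEE] at hmaxE
      simp only [Matrix.zero_mul, trace_zero, sub_zero, le_sub_self_iff] at hmaxE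
      exact hS.trace_mul_mul_transpose_eq_zero_iff.mp
        (le_antisymm hmaxE (hS.trace_mul_mul_transpose_nonneg _))
    refine ⟨Eᵀ * U, ?_, sub_eq_zero.mp hres⟩
    have hgram := transpose_mul_self_sub_proj hE U
    rwa [hres, Matrix.mul_zero, hU, eq_comm, sub_eq_zero, eq_comm] at hgram
  · rintro ⟨Q, hQ, rfl⟩
    have hEQ : (E * Q)ᵀ * (E * Q) = 1 := by
      rw [transpose_mul, Matrix.mul_assoc, ← Matrix.mul_assoc Eᵀ, hE, Matrix.one_mul, hQ]
    refine ⟨hEQ, fun W hW => ?_⟩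
    rw [trace_proj_mul_eq_sub hE hEQ, ← Matrix.mul_assoc Eᵀ, hE, Matrix.one_mul, sub_self]
    simpa using hvalue_le hW

/-- For `E` a `d × r` (`r < d`) real matrix with orthonormal columns and `S`
an `r × r` symmetric positive definite matrix, the set of maximizers of
`U ↦ tr(E Eᵀ U S Uᵀ)` over `{U : Uᵀ U = I_r}` is exactly `{E Q : Q orthogonal}`. -/
theorem maximizers_pca_like {d r : ℕ} (hd : 0 < d) (hr : 0 < r) (hrd : r < d)
    (E : Matrix (Fin d) (Fin r) ℝ) (hE : Eᵀ * E = 1)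
    (S : Matrix (Fin r) (Fin r) ℝ) (hSsym : S.IsSymm) (hS : S.PosDef) :
    {U : Matrix (Fin d) (Fin r) ℝ | Uᵀ * U = 1 ∧
        ∀ W : Matrix (Fin d) (Fin r) ℝ, Wᵀ * W = 1 →
          (E * Eᵀ * W * S * Wᵀ).trace ≤ (E * Eᵀ * U * S * Uᵀ).trace} =
      {U : Matrix (Fin d) (Fin r) ℝ |
        ∃ Q : Matrix (Fin r) (Fin r) ℝ, Qᵀ * Q = 1 ∧ U = E * Q} :=
  maximizers_pca_like_general E hE S hS
end

section
/- Fix σ > 0 and a measurable noise schedule σ_• : (0,1) → ℝ with 0 < σ_min ≤ σ_t ≤ σ_max < ∞ for all t ∈ (0,1). Define f_σ : (0, ∞) → ℝ by f_σ(u) := ∫₀¹ [ u/(σ² + σ_t² + 1)² − u/(σ_t² (u + σ_t²)) ] dt. Then f_σ is strictly convex on (0, ∞) and has a unique global minimizer at u* = σ² + 1. -/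
/-!
Since `u / (c * (u + c)) = 1 / c - 1 / (u + c)`, each integrand is an affine function of `u` plus
the strictly convex `1 / (u + c)`, and strict convexity survives integration against a nonzero
measure. For `s = σ² + 1` the denominator `σ² + c + 1` equals `s + c`, and then the integrand at
`u` exceeds its value at `s` by `(u - s)² / ((s + c)² (u + c))`: every integrand is minimised at
the same point `s`, hence so is the integral.
-/

open MeasureTheory Set

section Integral

variable {α : Type*} [MeasurableSpace α] {μ : Measure α}

theorem integral_lt_integral_of_ae_lt [NeZero μ] {f g : α → ℝ} (hf : Integrable f μ)
    (hg : Integrable g μ) (hfg : ∀ᵐ a ∂μ, f a < g a) : ∫ a, f a ∂μ < ∫ a, g a ∂μ := by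
  have hsupp : Function.support (fun a => g a - f a) =ᵐ[μ] univ :=
    Filter.eventuallyEq_univ.mpr <| hfg.mono fun a h => sub_ne_zero.mpr h.ne'
  have hpos : 0 < ∫ a, (g a - f a) ∂μ := by
    rw [integral_pos_iff_support_of_nonneg_ae (hfg.mono fun a h => sub_nonneg.mpr h.le) (hg.sub hf),
      measure_congr hsupp, pos_iff_ne_zero, Measure.measure_univ_ne_zero]
    exact NeZero.ne μ
  rw [integral_sub hg hf] at hpos
  linarith

theorem StrictConvexOn.integral [NeZero μ] {s : Set ℝ} {f : α → ℝ → ℝ}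
    (hf : ∀ᵐ a ∂μ, StrictConvexOn ℝ s (f a)) (hint : ∀ x ∈ s, Integrable (fun a => f a x) μ) :
    StrictConvexOn ℝ s fun x => ∫ a, f a x ∂μ := by
  have hs : Convex ℝ s := hf.exists.choose_spec.1
  refine ⟨hs, fun x hx y hy hxy θ η hθ hη hθη => ?_⟩
  have hcomb : Integrable (fun a => θ * f a x + η * f a y) μ :=
    ((hint x hx).const_mul θ).add ((hint y hy).const_mul η)
  calc ∫ a, f a (θ • x + η • y) ∂μ
      < ∫ a, (θ * f a x + η * f a y) ∂μ :=
        integral_lt_integral_of_ae_lt (hint _ (hs hx hy hθ.le hη.le hθη)) hcomb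
          (hf.mono fun a ha => ha.2 hx hy hxy hθ hη hθη)
    _ = θ • ∫ a, f a x ∂μ + η • ∫ a, f a y ∂μ := by
        rw [integral_add ((hint x hx).const_mul θ) ((hint y hy).const_mul η), integral_const_mul,
          integral_const_mul, smul_eq_mul, smul_eq_mul]

end Integral

theorem strictConvexOn_div_sub_div_mul_add (a : ℝ) {c : ℝ} (hc : 0 < c) :
    StrictConvexOn ℝ (Ioi 0) fun u => u / a - u / (c * (u + c)) := by
  have hinv : StrictConvexOn ℝ (Ioi 0) fun u : ℝ => (c + u) ^ (-1 : ℤ) :=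
    ((strictConvexOn_zpow (by norm_num) (by norm_num)).translate_right c).subset
      (fun u (hu : 0 < u) => show 0 < c + u by linarith) (convex_Ioi 0)
  have hlin : ConvexOn ℝ (Ioi 0) fun u : ℝ => u / a - 1 / c :=
    (LinearMap.convexOn ((LinearMap.id : ℝ →ₗ[ℝ] ℝ).smulRight a⁻¹) (convex_Ioi 0)).add_const _
  refine (hlin.add_strictConvexOn hinv).congr fun u (hu : 0 < u) => ?_
  simp only [Pi.add_apply, zpow_neg_one]
  field_simp
  ring

theorem div_sq_sub_div_mul_add_lt {s c u d : ℝ} (hd : d = s + c) (hd0 : d ≠ 0) (hc : c ≠ 0)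
    (hu : 0 < u + c) (hne : u ≠ s) :
    s / d ^ 2 - s / (c * (s + c)) < u / d ^ 2 - u / (c * (u + c)) := by
  have key : (u / d ^ 2 - u / (c * (u + c))) - (s / d ^ 2 - s / (c * (s + c)))
      = (u - s) ^ 2 / (d ^ 2 * (u + c)) := by
    subst hd
    field_simp
    ring
  have := sq_pos_of_ne_zero (sub_ne_zero.mpr hne)
  have : 0 < (u - s) ^ 2 / (d ^ 2 * (u + c)) := by positivity
  linarith

theorem abs_div_sq_sub_div_mul_add_le {c d u : ℝ} (hc : 0 < c) (hd : 1 ≤ d) (hu : 0 ≤ u) :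
    |u / d ^ 2 - u / (c * (u + c))| ≤ u + c⁻¹ := by
  have hd2 : 1 ≤ d ^ 2 := one_le_pow₀ hd
  refine abs_sub_le_of_nonneg_of_le (by positivity) ?_ (by positivity) ?_
  · have := div_le_self hu hd2
    have := inv_pos.mpr hc
    linarith
  · have : u / (c * (u + c)) ≤ c⁻¹ := by
      rw [div_le_iff₀ (by positivity), ← mul_assoc, inv_mul_cancel₀ hc.ne', one_mul]
      linarith
    linarith

theorem integrable_div_sq_sub_div_mul_add {α : Type*} [MeasurableSpace α] {μ : Measure α}
    [IsFiniteMeasure μ] {c d : α → ℝ} (hc : Measurable c) (hd : Measurable d) {m u : ℝ}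
    (hm : 0 < m) (hcm : ∀ᵐ t ∂μ, m ≤ c t) (hd1 : ∀ᵐ t ∂μ, 1 ≤ d t) (hu : 0 ≤ u) :
    Integrable (fun t => u / d t ^ 2 - u / (c t * (u + c t))) μ := by
  refine .of_bound (by fun_prop) (u + m⁻¹) ?_
  filter_upwards [hcm, hd1] with t hmc hdt
  have hct : 0 < c t := hm.trans_le hmc
  calc ‖u / d t ^ 2 - u / (c t * (u + c t))‖ ≤ u + (c t)⁻¹ :=
        abs_div_sq_sub_div_mul_add_le hct hdt hu
    _ ≤ u + m⁻¹ := by gcongr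

theorem f_sigma_strictConvex_and_unique_min_general
    (σ : ℝ)
    (σt : ℝ → ℝ) (hmeas : Measurable σt)
    (σmin σmax : ℝ) (hσmin : 0 < σmin)
    (hbound : ∀ t ∈ Set.Ioo (0 : ℝ) 1, σmin ≤ σt t ∧ σt t ≤ σmax) :
    StrictConvexOn ℝ (Set.Ioi (0 : ℝ))
      (fun u => ∫ t in Set.Ioo (0 : ℝ) 1,
        (u / (σ ^ 2 + (σt t) ^ 2 + 1) ^ 2 - u / ((σt t) ^ 2 * (u + (σt t) ^ 2)))) ∧
    ∀ u ∈ Set.Ioi (0 : ℝ), u ≠ σ ^ 2 + 1 →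
      (∫ t in Set.Ioo (0 : ℝ) 1,
          ((σ ^ 2 + 1) / (σ ^ 2 + (σt t) ^ 2 + 1) ^ 2 -
            (σ ^ 2 + 1) / ((σt t) ^ 2 * ((σ ^ 2 + 1) + (σt t) ^ 2)))) <
        ∫ t in Set.Ioo (0 : ℝ) 1,
          (u / (σ ^ 2 + (σt t) ^ 2 + 1) ^ 2 - u / ((σt t) ^ 2 * (u + (σt t) ^ 2))) := by
  have : NeZero (volume.restrict (Ioo (0 : ℝ) 1)) := ⟨by simp⟩
  have hlower : ∀ᵐ t ∂volume.restrict (Ioo (0 : ℝ) 1), σmin ^ 2 ≤ σt t ^ 2 :=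
    (ae_restrict_mem measurableSet_Ioo).mono fun t ht => pow_le_pow_left₀ hσmin.le (hbound t ht).1 2
  have hpos : ∀ᵐ t ∂volume.restrict (Ioo (0 : ℝ) 1), 0 < σt t ^ 2 :=
    hlower.mono fun t ht => (pow_pos hσmin 2).trans_le ht
  have hint : ∀ u ∈ Ioi (0 : ℝ), Integrable (fun t => u / (σ ^ 2 + σt t ^ 2 + 1) ^ 2
      - u / (σt t ^ 2 * (u + σt t ^ 2))) (volume.restrict (Ioo (0 : ℝ) 1)) := fun u hu =>
    integrable_div_sq_sub_div_mul_add (by fun_prop) (by fun_prop) (pow_pos hσmin 2) hlower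
      (.of_forall fun t => le_add_of_nonneg_left (by positivity)) hu.le
  refine ⟨.integral (hpos.mono fun t ht => strictConvexOn_div_sub_div_mul_add _ ht) hint,
    fun u hu hne =>
      integral_lt_integral_of_ae_lt (hint _ (mem_Ioi.mpr (by positivity))) (hint u hu) ?_⟩
  filter_upwards [hpos] with t ht
  exact div_sq_sub_div_mul_add_lt (by ring) (by positivity) ht.ne' (add_pos hu ht) hne

/-- For `σ > 0` and a measurable bounded noise schedule `σ_t` on `(0,1)`,
the per-eigenvalue loss `f_σ(u) = ∫₀¹ [u/(σ² + σ_t² + 1)² − u/(σ_t²(u + σ_t²))] dt`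
is strictly convex on `(0, ∞)` with unique global minimizer `u* = σ² + 1`. -/
theorem f_sigma_strictConvex_and_unique_min
    (σ : ℝ) (hσ : 0 < σ)
    (σt : ℝ → ℝ) (hmeas : Measurable σt)
    (σmin σmax : ℝ) (hσmin : 0 < σmin)
    (hbound : ∀ t ∈ Set.Ioo (0 : ℝ) 1, σmin ≤ σt t ∧ σt t ≤ σmax) :
    StrictConvexOn ℝ (Set.Ioi (0 : ℝ))
      (fun u => ∫ t in Set.Ioo (0 : ℝ) 1,
        (u / (σ ^ 2 + (σt t) ^ 2 + 1) ^ 2 - u / ((σt t) ^ 2 * (u + (σt t) ^ 2)))) ∧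
    ∀ u ∈ Set.Ioi (0 : ℝ), u ≠ σ ^ 2 + 1 →
      (∫ t in Set.Ioo (0 : ℝ) 1,
          ((σ ^ 2 + 1) / (σ ^ 2 + (σt t) ^ 2 + 1) ^ 2 -
            (σ ^ 2 + 1) / ((σt t) ^ 2 * ((σ ^ 2 + 1) + (σt t) ^ 2)))) <
        ∫ t in Set.Ioo (0 : ℝ) 1,
          (u / (σ ^ 2 + (σt t) ^ 2 + 1) ^ 2 - u / ((σt t) ^ 2 * (u + (σt t) ^ 2))) :=
  f_sigma_strictConvex_and_unique_min_general σ σt hmeas σmin σmax hσmin hbound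
end

section
/- Fix σ > 0 and a measurable noise schedule σ_• : (0,1) → ℝ with 0 < σ_min ≤ σ_t ≤ σ_max < ∞ for all t ∈ (0,1), and define f_σ : (0, ∞) → ℝ by f_σ(u) := ∫₀¹ [ u/(σ² + σ_t² + 1)² − u/(σ_t² (u + σ_t²)) ] dt. Let r be a positive integer. Then for every r × r symmetric positive definite real matrix M with eigenvalues λ₁, …, λ_r, one has ∑_{i=1}^r f_σ(λ_i) ≥ r · f_σ(1 + σ²), with equality if and only if M = (1 + σ²) I_r. -/
/-!
Write `u₀ = 1 + σ²` and `s = σ_t`. Since `u / (s² (u + s²)) = 1 / s² - 1 / (u + s²)`, the integrand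
of `f_σ` exceeds its value at `u₀` by exactly `(u - u₀)² / ((u₀ + s²)² (u + s²))`, which is
nonnegative and vanishes only at `u = u₀`. Integrating, `f_σ` has a strict global minimum at `u₀`,
so the sum over the eigenvalues is at least `r f_σ(u₀)`, with equality iff every eigenvalue is `u₀`;
by the spectral theorem this happens iff `M = u₀ I`.
-/

open Matrix MeasureTheory

namespace Matrix.IsHermitian

variable {𝕜 n : Type*} [RCLike 𝕜] [Fintype n] [DecidableEq n] {A : Matrix n n 𝕜}

theorem eigenvalues_eq_const_iff (hA : A.IsHermitian) (c : ℝ) :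
    (∀ i, hA.eigenvalues i = c) ↔ A = c • (1 : Matrix n n 𝕜) := by
  rw [← Algebra.algebraMap_eq_smul_one, IsScalarTower.algebraMap_apply ℝ 𝕜]
  constructor
  · intro h
    have hdiag : diagonal (RCLike.ofReal ∘ hA.eigenvalues) = algebraMap 𝕜 (Matrix n n 𝕜) c := by
      ext i j
      simp [diagonal_apply, algebraMap_matrix_apply, h]
    rw [hA.spectral_theorem, hdiag, AlgHomClass.commutes]
  · rintro rfl i
    have hdiag := hA.conjStarAlgAut_star_eigenvectorUnitary
    rw [AlgHomClass.commutes] at hdiag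
    simpa [algebraMap_matrix_apply] using (congr_fun₂ hdiag i i).symm

end Matrix.IsHermitian

theorem Finset.sum_eq_card_nsmul_iff_of_le {ι M : Type*} [Fintype ι] [AddCommMonoid M]
    [PartialOrder M] [IsOrderedCancelAddMonoid M] {f : ι → M} {c : M} (h : ∀ i, c ≤ f i) :
    ∑ i, f i = Fintype.card ι • c ↔ ∀ i, f i = c := by
  rw [← Finset.card_univ, ← Finset.sum_const, eq_comm,
    Finset.sum_eq_sum_iff_of_le fun i _ ↦ h i]
  simp only [Finset.mem_univ, forall_const, eq_comm]

noncomputable def noiseIntegrand (σ s u : ℝ) : ℝ :=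
  u / (σ ^ 2 + s ^ 2 + 1) ^ 2 - u / (s ^ 2 * (u + s ^ 2))

section Pointwise

variable {σ s u : ℝ}

theorem noiseIntegrand_sub_noiseIntegrand_one_add_sq (hs : s ≠ 0) (hu : u + s ^ 2 ≠ 0) :
    noiseIntegrand σ s u - noiseIntegrand σ s (1 + σ ^ 2) =
      (u - (1 + σ ^ 2)) ^ 2 / ((σ ^ 2 + s ^ 2 + 1) ^ 2 * (u + s ^ 2)) := by
  have : σ ^ 2 + s ^ 2 + 1 ≠ 0 := by positivity
  unfold noiseIntegrand
  field_simp
  ring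

theorem noiseIntegrand_one_add_sq_le (hs : s ≠ 0) (hu : 0 < u) :
    noiseIntegrand σ s (1 + σ ^ 2) ≤ noiseIntegrand σ s u := by
  have hsub := noiseIntegrand_sub_noiseIntegrand_one_add_sq (σ := σ) hs
    (by positivity : u + s ^ 2 ≠ 0)
  have : 0 ≤ noiseIntegrand σ s u - noiseIntegrand σ s (1 + σ ^ 2) := by
    rw [hsub]
    positivity
  linarith

theorem noiseIntegrand_eq_iff (hs : s ≠ 0) (hu : 0 < u) :
    noiseIntegrand σ s u = noiseIntegrand σ s (1 + σ ^ 2) ↔ u = 1 + σ ^ 2 := by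
  rw [← sub_eq_zero, noiseIntegrand_sub_noiseIntegrand_one_add_sq hs (by positivity),
    div_eq_zero_iff, or_iff_left (by positivity), sq_eq_zero_iff, sub_eq_zero]

theorem abs_noiseIntegrand_le {σmin : ℝ} (hσmin : 0 < σmin) (hs : σmin ≤ s) (hu : 0 < u) :
    |noiseIntegrand σ s u| ≤ u + 1 / σmin ^ 2 := by
  have h₁ : u / (σ ^ 2 + s ^ 2 + 1) ^ 2 ≤ u :=
    div_le_self hu.le (one_le_pow₀ (by nlinarith [sq_nonneg σ, sq_nonneg s]))
  have h₂ : u / (s ^ 2 * (u + s ^ 2)) ≤ 1 / σmin ^ 2 := by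
    have : 0 < s := hσmin.trans_le hs
    rw [div_le_div_iff₀ (by positivity) (by positivity)]
    nlinarith [pow_le_pow_left₀ hσmin.le hs 2, sq_nonneg s]
  calc |noiseIntegrand σ s u|
      ≤ |u / (σ ^ 2 + s ^ 2 + 1) ^ 2| + |u / (s ^ 2 * (u + s ^ 2))| := abs_sub _ _
    _ ≤ u + 1 / σmin ^ 2 := by
      rw [abs_of_nonneg (by positivity), abs_of_nonneg (by positivity)]
      exact add_le_add h₁ h₂

end Pointwise

section Integral

variable {α : Type*} [MeasurableSpace α] {μ : Measure α} {σt : α → ℝ} {σ σmin u : ℝ}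

theorem integrable_noiseIntegrand [IsFiniteMeasure μ] (hσt : Measurable σt) (hσmin : 0 < σmin)
    (hlow : ∀ᵐ t ∂μ, σmin ≤ σt t) (hu : 0 < u) :
    Integrable (fun t ↦ noiseIntegrand σ (σt t) u) μ := by
  refine Integrable.mono' (integrable_const (u + 1 / σmin ^ 2)) ?_ ?_
  · unfold noiseIntegrand
    fun_prop
  · filter_upwards [hlow] with t ht
    exact abs_noiseIntegrand_le hσmin ht hu

theorem ae_noiseIntegrand_one_add_sq_le (hσmin : 0 < σmin) (hlow : ∀ᵐ t ∂μ, σmin ≤ σt t)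
    (hu : 0 < u) :
    ∀ᵐ t ∂μ, noiseIntegrand σ (σt t) (1 + σ ^ 2) ≤ noiseIntegrand σ (σt t) u := by
  filter_upwards [hlow] with t ht
  exact noiseIntegrand_one_add_sq_le (hσmin.trans_le ht).ne' hu

theorem integral_noiseIntegrand_one_add_sq_le [IsFiniteMeasure μ] (hσt : Measurable σt)
    (hσmin : 0 < σmin) (hlow : ∀ᵐ t ∂μ, σmin ≤ σt t) (hu : 0 < u) :
    ∫ t, noiseIntegrand σ (σt t) (1 + σ ^ 2) ∂μ ≤ ∫ t, noiseIntegrand σ (σt t) u ∂μ :=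
  integral_mono_ae (integrable_noiseIntegrand hσt hσmin hlow (by positivity))
    (integrable_noiseIntegrand hσt hσmin hlow hu) (ae_noiseIntegrand_one_add_sq_le hσmin hlow hu)

theorem integral_noiseIntegrand_eq_iff [IsFiniteMeasure μ] [NeZero μ] (hσt : Measurable σt)
    (hσmin : 0 < σmin) (hlow : ∀ᵐ t ∂μ, σmin ≤ σt t) (hu : 0 < u) :
    ∫ t, noiseIntegrand σ (σt t) u ∂μ = ∫ t, noiseIntegrand σ (σt t) (1 + σ ^ 2) ∂μ ↔
      u = 1 + σ ^ 2 := by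
  refine ⟨fun h ↦ ?_, fun h ↦ by rw [h]⟩
  have hae := (integral_eq_iff_of_ae_le
    (integrable_noiseIntegrand hσt hσmin hlow (by positivity))
    (integrable_noiseIntegrand hσt hσmin hlow hu)
    (ae_noiseIntegrand_one_add_sq_le hσmin hlow hu)).mp h.symm
  obtain ⟨t, ht, heq⟩ := (hlow.and hae).exists
  exact (noiseIntegrand_eq_iff (hσmin.trans_le ht).ne' hu).mp heq.symm

end Integral

theorem sum_f_sigma_eigenvalues_min_general
    (σ : ℝ)
    (σt : ℝ → ℝ) (hmeas : Measurable σt)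
    (σmin σmax : ℝ) (hσmin : 0 < σmin)
    (hbound : ∀ t ∈ Set.Ioo (0 : ℝ) 1, σmin ≤ σt t ∧ σt t ≤ σmax)
    (f : ℝ → ℝ)
    (hf : ∀ u : ℝ, 0 < u → f u = ∫ t in Set.Ioo (0 : ℝ) 1,
      (u / (σ ^ 2 + (σt t) ^ 2 + 1) ^ 2 - u / ((σt t) ^ 2 * (u + (σt t) ^ 2))))
    (r : ℕ)
    (M : Matrix (Fin r) (Fin r) ℝ) (hM : M.PosDef) :
    (r : ℝ) * f (1 + σ ^ 2) ≤ ∑ i, f (hM.isHermitian.eigenvalues i) ∧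
      ((∑ i, f (hM.isHermitian.eigenvalues i)) = (r : ℝ) * f (1 + σ ^ 2) ↔
        M = (1 + σ ^ 2) • (1 : Matrix (Fin r) (Fin r) ℝ)) := by
  have : NeZero (volume.restrict (Set.Ioo (0 : ℝ) 1)) := ⟨by simp⟩
  have hlow : ∀ᵐ t ∂volume.restrict (Set.Ioo (0 : ℝ) 1), σmin ≤ σt t :=
    (ae_restrict_iff' measurableSet_Ioo).mpr (.of_forall fun t ht ↦ (hbound t ht).1)
  have hpos := hM.eigenvalues_pos
  have hle : ∀ i, f (1 + σ ^ 2) ≤ f (hM.isHermitian.eigenvalues i) := fun i ↦ by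
    rw [hf _ (hpos i), hf _ (by positivity)]
    exact integral_noiseIntegrand_one_add_sq_le hmeas hσmin hlow (hpos i)
  have heq : ∀ i, f (hM.isHermitian.eigenvalues i) = f (1 + σ ^ 2) ↔
      hM.isHermitian.eigenvalues i = 1 + σ ^ 2 := fun i ↦ by
    rw [hf _ (hpos i), hf _ (by positivity)]
    exact integral_noiseIntegrand_eq_iff hmeas hσmin hlow (hpos i)
  rw [show (r : ℝ) * f (1 + σ ^ 2) = Fintype.card (Fin r) • f (1 + σ ^ 2) by simp,
    Finset.sum_eq_card_nsmul_iff_of_le hle, ← hM.isHermitian.eigenvalues_eq_const_iff]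
  exact ⟨Finset.card_nsmul_le_sum _ _ _ fun i _ ↦ hle i, forall_congr' heq⟩

/-- With `f_σ(u) = ∫₀¹ [u/(σ² + σ_t² + 1)² − u/(σ_t²(u + σ_t²))] dt`
(for `u > 0`), every `r × r` symmetric positive definite real matrix `M` with eigenvalues
`λ₁, …, λ_r` satisfies `∑ i, f_σ(λ_i) ≥ r · f_σ(1 + σ²)`, with equality iff
`M = (1 + σ²) I_r`. -/
theorem sum_f_sigma_eigenvalues_min
    (σ : ℝ) (hσ : 0 < σ)
    (σt : ℝ → ℝ) (hmeas : Measurable σt)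
    (σmin σmax : ℝ) (hσmin : 0 < σmin)
    (hbound : ∀ t ∈ Set.Ioo (0 : ℝ) 1, σmin ≤ σt t ∧ σt t ≤ σmax)
    (f : ℝ → ℝ)
    (hf : ∀ u : ℝ, 0 < u → f u = ∫ t in Set.Ioo (0 : ℝ) 1,
      (u / (σ ^ 2 + (σt t) ^ 2 + 1) ^ 2 - u / ((σt t) ^ 2 * (u + (σt t) ^ 2))))
    (r : ℕ) (hr : 0 < r)
    (M : Matrix (Fin r) (Fin r) ℝ) (hMsym : M.IsSymm) (hM : M.PosDef) :
    (r : ℝ) * f (1 + σ ^ 2) ≤ ∑ i, f (hM.isHermitian.eigenvalues i) ∧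
      ((∑ i, f (hM.isHermitian.eigenvalues i)) = (r : ℝ) * f (1 + σ ^ 2) ↔
        M = (1 + σ ^ 2) • (1 : Matrix (Fin r) (Fin r) ℝ)) :=
  sum_f_sigma_eigenvalues_min_general σ σt hmeas σmin σmax hσmin hbound f hf r M hM
end

section
/- Let d, r be positive integers with r ≤ d, let E and U be d × r real matrices each with orthonormal columns (Eᵀ E = I_r and Uᵀ U = I_r), let M be an r × r symmetric real matrix, and let c, s > 0. Setting γ := 1/(c(c+1)), the following identity holds: tr( (E Eᵀ + c I_d)⁻² (U M Uᵀ + s I_d) ) = c⁻² tr(M) + (γ² − 2 c⁻¹ γ) tr(E Eᵀ U M Uᵀ) + s ( d c⁻² + (γ² − 2 c⁻¹ γ) r ). -/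
/-! Since `Eᵀ E = 1`, the matrix `P = E Eᵀ` is an orthogonal projection, so `(P + c I)⁻¹` and its
square lie in the two-dimensional algebra spanned by `I` and `P`: the inverse is `c⁻¹ I − γ P`, and
its square is `c⁻² I + (γ² − 2 c⁻¹ γ) P`. The trace of the product is then linear in `tr P = r`,
`tr (U M Uᵀ) = tr M` and `tr (P U M Uᵀ)`. -/

open Matrix

theorem IsIdempotentElem.smul_one_sub_smul_sq {R A : Type*} [CommRing R] [Ring A] [Algebra R A]
    {P : A} (hP : IsIdempotentElem P) (a b : R) :
    (a • 1 - b • P) ^ 2 = a ^ 2 • (1 : A) + (b ^ 2 - 2 * a * b) • P := by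
  rw [sq]
  simp only [mul_sub, sub_mul, smul_mul_smul_comm, one_mul, mul_one, hP.eq]
  match_scalars <;> ring

namespace Matrix

variable {m n K : Type*} [Fintype m] [DecidableEq m] [Fintype n] [Field K]

theorem isIdempotentElem_mul_transpose {E : Matrix n m K} (hE : Eᵀ * E = 1) :
    IsIdempotentElem (E * Eᵀ) := by
  rw [IsIdempotentElem, Matrix.mul_assoc, ← Matrix.mul_assoc Eᵀ, hE, Matrix.one_mul]

theorem inv_add_smul_one_of_isIdempotentElem [DecidableEq n] {P : Matrix n n K}
    (hP : IsIdempotentElem P) {c : K} (hc : c ≠ 0) (hc1 : c + 1 ≠ 0) :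
    (P + c • 1)⁻¹ = c⁻¹ • 1 - (c * (c + 1))⁻¹ • P := by
  refine inv_eq_right_inv ?_
  simp only [add_mul, mul_sub, smul_mul_assoc, mul_smul_comm, one_mul, mul_one, hP.eq]
  match_scalars <;> field_simp
  ring

theorem trace_mul_transpose_of_transpose_mul_eq_one {E : Matrix n m K}
    (hE : Eᵀ * E = 1) : (E * Eᵀ).trace = Fintype.card m := by
  rw [trace_mul_comm, hE, trace_one]

theorem trace_mul_mul_transpose_of_transpose_mul_eq_one {U : Matrix n m K}
    (hU : Uᵀ * U = 1) (M : Matrix m m K) : (U * M * Uᵀ).trace = M.trace := by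
  rw [trace_mul_comm, ← Matrix.mul_assoc, hU, Matrix.one_mul]

end Matrix

theorem trace_cross_term_identity_general {d r : ℕ}
    (E U : Matrix (Fin d) (Fin r) ℝ) (hE : Eᵀ * E = 1) (hU : Uᵀ * U = 1)
    (M : Matrix (Fin r) (Fin r) ℝ)
    (c s : ℝ) (hc : 0 < c)
    (γ : ℝ) (hγ : γ = 1 / (c * (c + 1))) :
    (((E * Eᵀ + c • (1 : Matrix (Fin d) (Fin d) ℝ))⁻¹ ^ 2) *
        (U * M * Uᵀ + s • (1 : Matrix (Fin d) (Fin d) ℝ))).trace =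
      (c ^ 2)⁻¹ * M.trace + (γ ^ 2 - 2 * c⁻¹ * γ) * (E * Eᵀ * U * M * Uᵀ).trace +
        s * ((d : ℝ) * (c ^ 2)⁻¹ + (γ ^ 2 - 2 * c⁻¹ * γ) * (r : ℝ)) := by
  have hP := isIdempotentElem_mul_transpose hE
  rw [one_div] at hγ
  rw [inv_add_smul_one_of_isIdempotentElem hP hc.ne' (by positivity), ← hγ, hP.smul_one_sub_smul_sq, inv_pow,
    show E * Eᵀ * U * M * Uᵀ = E * Eᵀ * (U * M * Uᵀ) by simp only [Matrix.mul_assoc]]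
  simp only [add_mul, mul_add, smul_mul_assoc, mul_smul_comm, one_mul, mul_one, trace_add,
    trace_smul, smul_eq_mul, trace_one, Fintype.card_fin,
    trace_mul_mul_transpose_of_transpose_mul_eq_one hU,
    trace_mul_transpose_of_transpose_mul_eq_one hE]
  ring

/-- For `E, U` d × r real matrices with orthonormal columns (`r ≤ d`),
`M` an `r × r` symmetric real matrix, `c, s > 0`, and `γ := 1/(c(c+1))`,
`tr((E Eᵀ + c I_d)⁻² (U M Uᵀ + s I_d)) = c⁻² tr(M) + (γ² − 2 c⁻¹ γ) tr(E Eᵀ U M Uᵀ)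
  + s (d c⁻² + (γ² − 2 c⁻¹ γ) r)`. -/
theorem trace_cross_term_identity {d r : ℕ} (hd : 0 < d) (hr : 0 < r) (hrd : r ≤ d)
    (E U : Matrix (Fin d) (Fin r) ℝ) (hE : Eᵀ * E = 1) (hU : Uᵀ * U = 1)
    (M : Matrix (Fin r) (Fin r) ℝ) (hMsym : M.IsSymm)
    (c s : ℝ) (hc : 0 < c) (hs : 0 < s)
    (γ : ℝ) (hγ : γ = 1 / (c * (c + 1))) :
    (((E * Eᵀ + c • (1 : Matrix (Fin d) (Fin d) ℝ))⁻¹ ^ 2) *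
        (U * M * Uᵀ + s • (1 : Matrix (Fin d) (Fin d) ℝ))).trace =
      (c ^ 2)⁻¹ * M.trace + (γ ^ 2 - 2 * c⁻¹ * γ) * (E * Eᵀ * U * M * Uᵀ).trace +
        s * ((d : ℝ) * (c ^ 2)⁻¹ + (γ ^ 2 - 2 * c⁻¹ * γ) * (r : ℝ)) :=
  trace_cross_term_identity_general E U hE hU M c s hc γ hγ
end

section
/- Let d, r be positive integers with r < d, and let E be a d × r real matrix with orthonormal columns (Eᵀ E = I_r). Fix σ > 0 and a measurable noise schedule σ_• : (0,1) → ℝ with 0 < σ_min ≤ σ_t ≤ σ_max < ∞ for all t ∈ (0,1). Then the time-averaged coefficient κ := ∫₀¹ [ 1/((σ² + σ_t²)² (σ² + σ_t² + 1)²) − 2/((σ² + σ_t²)² (σ² + σ_t² + 1)) ] dt is strictly negative, and consequently, for any fixed r × r symmetric positive definite matrix Σ, the function U ↦ κ · tr(E Eᵀ U Σ Uᵀ) over {U ∈ ℝ^{d×r} : Uᵀ U = I_r} is minimized exactly on the set {E Q : Q an r × r orthogonal matrix}, where it takes the value κ · tr(Σ). -/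
open Matrix MeasureTheory

/-!
With `b = σ² + σ_t² ≥ σ_min² > 0`, the integrand of `κ` equals `-(2b + 1) / (b² (b + 1)²)`,
which is negative and bounded, so `κ < 0`. Minimizing `κ · tr(E Eᵀ U S Uᵀ)` thus means maximizing
`tr(P U S Uᵀ)` for the orthogonal projection `P = E Eᵀ`. For orthonormal `U`,
`tr S - tr(P U S Uᵀ) = tr(D S Dᵀ)` with `D = U - P U`; since `S` is positive definite this is
nonnegative and vanishes exactly when `U = P U = E (Eᵀ U)`, and then `Eᵀ U` is orthogonal.
-/

/-- Evaluated at `b = σ² + σ_t²`, this is the integrand of `κ`. -/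
noncomputable def kappaIntegrand (b : ℝ) : ℝ := 1 / (b ^ 2 * (b + 1) ^ 2) - 2 / (b ^ 2 * (b + 1))

theorem kappaIntegrand_eq {b : ℝ} (hb : 0 < b) :
    kappaIntegrand b = -(2 * b + 1) / (b ^ 2 * (b + 1) ^ 2) := by
  unfold kappaIntegrand
  field_simp
  ring

theorem kappaIntegrand_neg {b : ℝ} (hb : 0 < b) : kappaIntegrand b < 0 := by
  rw [kappaIntegrand_eq hb]
  exact div_neg_of_neg_of_pos (by linarith) (by positivity)

theorem abs_kappaIntegrand_le {m b : ℝ} (hm : 0 < m) (hmb : m ≤ b) :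
    |kappaIntegrand b| ≤ 2 / m ^ 2 := by
  have hb : 0 < b := hm.trans_le hmb
  rw [kappaIntegrand_eq hb, abs_div, abs_neg, abs_of_pos (by linarith), abs_of_pos (by positivity),
    div_le_div_iff₀ (by positivity) (by positivity)]
  have hsq : m ^ 2 ≤ b ^ 2 := pow_le_pow_left₀ hm.le hmb 2
  calc (2 * b + 1) * m ^ 2 ≤ (2 * b + 1) * b ^ 2 := by gcongr
    _ ≤ 2 * (b ^ 2 * (b + 1) ^ 2) := by nlinarith [sq_nonneg b, mul_pos hb hb]

theorem measurable_kappaIntegrand : Measurable kappaIntegrand := by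
  unfold kappaIntegrand
  fun_prop

theorem setIntegral_neg_of_forall_neg {X : Type*} [MeasurableSpace X] {μ : Measure X} {s : Set X}
    {f : X → ℝ} (hs : MeasurableSet s) (hμs : μ s ≠ 0) (hfi : IntegrableOn f s μ)
    (hf : ∀ x ∈ s, f x < 0) : ∫ x in s, f x ∂μ < 0 := by
  have hpos : 0 < ∫ x in s, (-f) x ∂μ := by
    rw [setIntegral_pos_iff_support_of_nonneg_ae _ hfi.neg]
    · have hsupp : Function.support (-f) ∩ s = s :=
        Set.inter_eq_right.mpr fun x hx => (neg_pos.mpr (hf x hx)).ne'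
      rwa [hsupp, pos_iff_ne_zero]
    · filter_upwards [ae_restrict_mem hs] with x hx using neg_nonneg.mpr (hf x hx).le
  rw [integral_neg'] at hpos
  linarith

theorem setIntegral_kappaIntegrand_neg {X : Type*} [MeasurableSpace X] {μ : Measure X}
    {s : Set X} (hs : MeasurableSet s) (hμs_ne_zero : μ s ≠ 0) (hμs_ne_top : μ s ≠ ⊤) {β : X → ℝ}
    (hβ : Measurable β) {m : ℝ} (hm : 0 < m) (hβm : ∀ x ∈ s, m ≤ β x) :
    ∫ x in s, kappaIntegrand (β x) ∂μ < 0 := by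
  have hfi : IntegrableOn (fun x => kappaIntegrand (β x)) s μ := by
    refine Measure.integrableOn_of_bounded hμs_ne_top
      (measurable_kappaIntegrand.comp hβ).aestronglyMeasurable (M := 2 / m ^ 2) ?_
    filter_upwards [ae_restrict_mem hs] with x hx
    exact abs_kappaIntegrand_le hm (hβm x hx)
  exact setIntegral_neg_of_forall_neg hs hμs_ne_zero hfi fun x hx =>
    kappaIntegrand_neg (hm.trans_le (hβm x hx))

section Projection

/- `E * Eᵀ` ("proj") is the orthogonal projection onto the column span of `E` when `Eᵀ * E = 1`. -/

variable {m n : Type*} [Fintype n]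

theorem eq_zero_of_mul_mul_transpose_eq_zero {S : Matrix n n ℝ} (hS : S.PosDef)
    {D : Matrix m n ℝ} (h : D * S * Dᵀ = 0) : D = 0 := by
  have hrow : ∀ i, D i = 0 := fun i => by
    by_contra hi
    have hdiag : (D * S * Dᵀ) i i = D i ⬝ᵥ (S *ᵥ D i) := by
      rw [mul_apply', dotProduct_mulVec]; rfl
    have hpos := hS.dotProduct_mulVec_pos hi
    rw [star_trivial, ← hdiag, h] at hpos
    exact hpos.ne rfl
  ext i j
  exact congrFun (hrow i) j

variable [Fintype m]

theorem trace_sub_mul_mul_transpose {P : Matrix m m ℝ} (hPt : Pᵀ = P) (hPP : P * P = P)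
    (W : Matrix m n ℝ) (S : Matrix n n ℝ) :
    ((W - P * W) * S * (W - P * W)ᵀ).trace = (W * S * Wᵀ).trace - (P * W * S * Wᵀ).trace := by
  have hexpand : (W - P * W) * S * (W - P * W)ᵀ =
      W * S * Wᵀ - P * (W * S * Wᵀ) - W * S * Wᵀ * P + P * (W * S * Wᵀ) * P := by
    simp only [transpose_sub, transpose_mul, hPt, Matrix.sub_mul, Matrix.mul_sub,
      Matrix.mul_assoc]
    abel
  rw [hexpand, show P * W * S * Wᵀ = P * (W * S * Wᵀ) by simp only [Matrix.mul_assoc]]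
  generalize W * S * Wᵀ = M
  rw [trace_add, trace_sub, trace_sub, trace_mul_comm M P, trace_mul_comm (P * M) P,
    ← Matrix.mul_assoc, hPP]
  ring

variable [DecidableEq n] {E W : Matrix m n ℝ}

theorem transpose_mul_self_mul {k : Type*} (hE : Eᵀ * E = 1) (Q : Matrix n k ℝ) :
    (E * Q)ᵀ * (E * Q) = Qᵀ * Q := by
  rw [transpose_mul, Matrix.mul_assoc, ← Matrix.mul_assoc Eᵀ, hE, Matrix.one_mul]

theorem proj_mul_mul {k : Type*} (hE : Eᵀ * E = 1) (Q : Matrix n k ℝ) :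
    E * Eᵀ * (E * Q) = E * Q := by
  rw [Matrix.mul_assoc, ← Matrix.mul_assoc Eᵀ, hE, Matrix.one_mul]

theorem proj_mul_eq_self_iff (hE : Eᵀ * E = 1) :
    E * Eᵀ * W = W ↔ ∃ Q : Matrix n n ℝ, W = E * Q :=
  ⟨fun h => ⟨Eᵀ * W, by rw [← Matrix.mul_assoc, h]⟩, fun ⟨Q, hQ⟩ => hQ ▸ proj_mul_mul hE Q⟩

theorem trace_mul_mul_transpose_of_orthonormal (hW : Wᵀ * W = 1) (S : Matrix n n ℝ) :
    (W * S * Wᵀ).trace = S.trace := by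
  rw [trace_mul_comm, ← Matrix.mul_assoc, hW, Matrix.one_mul]

theorem trace_proj_mul_mul_transpose_mul (hE : Eᵀ * E = 1) {Q : Matrix n n ℝ} (hQ : Qᵀ * Q = 1)
    (S : Matrix n n ℝ) : (E * Eᵀ * (E * Q) * S * (E * Q)ᵀ).trace = S.trace := by
  rw [proj_mul_mul hE,
    trace_mul_mul_transpose_of_orthonormal ((transpose_mul_self_mul hE Q).trans hQ)]

theorem trace_proj_mul_mul_transpose (hE : Eᵀ * E = 1) (hW : Wᵀ * W = 1) (S : Matrix n n ℝ) :
    (E * Eᵀ * W * S * Wᵀ).trace =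
      S.trace - ((W - E * Eᵀ * W) * S * (W - E * Eᵀ * W)ᵀ).trace := by
  have hPt : (E * Eᵀ)ᵀ = E * Eᵀ := by rw [transpose_mul, transpose_transpose]
  rw [trace_sub_mul_mul_transpose hPt (proj_mul_mul hE Eᵀ),
    trace_mul_mul_transpose_of_orthonormal hW]
  ring

theorem trace_proj_mul_mul_transpose_le (hE : Eᵀ * E = 1) (hW : Wᵀ * W = 1)
    {S : Matrix n n ℝ} (hS : S.PosSemidef) : (E * Eᵀ * W * S * Wᵀ).trace ≤ S.trace := by
  have hD := (hS.mul_mul_conjTranspose_same (W - E * Eᵀ * W)).trace_nonneg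
  rw [conjTranspose_eq_transpose_of_trivial] at hD
  linarith [trace_proj_mul_mul_transpose hE hW S]

theorem trace_proj_mul_mul_transpose_eq_iff (hE : Eᵀ * E = 1) (hW : Wᵀ * W = 1)
    {S : Matrix n n ℝ} (hS : S.PosDef) :
    (E * Eᵀ * W * S * Wᵀ).trace = S.trace ↔ E * Eᵀ * W = W := by
  have hD := (hS.posSemidef.mul_mul_conjTranspose_same (W - E * Eᵀ * W)).trace_eq_zero_iff
  rw [conjTranspose_eq_transpose_of_trivial] at hD
  rw [trace_proj_mul_mul_transpose hE hW, sub_eq_self, hD]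
  exact ⟨fun h => (sub_eq_zero.mp (eq_zero_of_mul_mul_transpose_eq_zero hS h)).symm,
    fun h => by rw [h, sub_self, Matrix.zero_mul, Matrix.zero_mul]⟩

theorem setOf_maximizers_trace_proj (hE : Eᵀ * E = 1) {S : Matrix n n ℝ} (hS : S.PosDef) :
    {U : Matrix m n ℝ | Uᵀ * U = 1 ∧ ∀ W : Matrix m n ℝ, Wᵀ * W = 1 →
        (E * Eᵀ * W * S * Wᵀ).trace ≤ (E * Eᵀ * U * S * Uᵀ).trace} =
      {U | ∃ Q : Matrix n n ℝ, Qᵀ * Q = 1 ∧ U = E * Q} := by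
  ext U
  constructor
  · rintro ⟨hU, hmax⟩
    have hEmax := hmax (E * (1 : Matrix n n ℝ)) (by rw [Matrix.mul_one, hE])
    rw [trace_proj_mul_mul_transpose_mul hE (by rw [transpose_one, Matrix.mul_one])] at hEmax
    obtain ⟨Q, rfl⟩ := (proj_mul_eq_self_iff hE).mp <|
      (trace_proj_mul_mul_transpose_eq_iff hE hU hS).mp <|
        (trace_proj_mul_mul_transpose_le hE hU hS.posSemidef).antisymm hEmax
    exact ⟨Q, (transpose_mul_self_mul hE Q).symm.trans hU, rfl⟩
  · rintro ⟨Q, hQ, rfl⟩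
    have hU : (E * Q)ᵀ * (E * Q) = 1 := (transpose_mul_self_mul hE Q).trans hQ
    refine ⟨hU, fun W hW => ?_⟩
    rw [trace_proj_mul_mul_transpose_mul hE hQ]
    exact trace_proj_mul_mul_transpose_le hE hW hS.posSemidef

end Projection

theorem kappa_neg_and_minimizers_general {d r : ℕ}
    (E : Matrix (Fin d) (Fin r) ℝ) (hE : Eᵀ * E = 1)
    (σ : ℝ)
    (σt : ℝ → ℝ) (hmeas : Measurable σt)
    (σmin σmax : ℝ) (hσmin : 0 < σmin)
    (hbound : ∀ t ∈ Set.Ioo (0 : ℝ) 1, σmin ≤ σt t ∧ σt t ≤ σmax)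
    (κ : ℝ)
    (hκ : κ = ∫ t in Set.Ioo (0 : ℝ) 1,
      (1 / ((σ ^ 2 + (σt t) ^ 2) ^ 2 * (σ ^ 2 + (σt t) ^ 2 + 1) ^ 2) -
        2 / ((σ ^ 2 + (σt t) ^ 2) ^ 2 * (σ ^ 2 + (σt t) ^ 2 + 1)))) :
    κ < 0 ∧
      ∀ S : Matrix (Fin r) (Fin r) ℝ, S.IsSymm → S.PosDef →
        ({U : Matrix (Fin d) (Fin r) ℝ | Uᵀ * U = 1 ∧
            ∀ W : Matrix (Fin d) (Fin r) ℝ, Wᵀ * W = 1 →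
              κ * (E * Eᵀ * U * S * Uᵀ).trace ≤ κ * (E * Eᵀ * W * S * Wᵀ).trace} =
          {U : Matrix (Fin d) (Fin r) ℝ |
            ∃ Q : Matrix (Fin r) (Fin r) ℝ, Qᵀ * Q = 1 ∧ U = E * Q}) ∧
        ∀ Q : Matrix (Fin r) (Fin r) ℝ, Qᵀ * Q = 1 →
          κ * (E * Eᵀ * (E * Q) * S * (E * Q)ᵀ).trace = κ * S.trace := by
  have hκneg : κ < 0 := by
    rw [hκ]
    refine setIntegral_kappaIntegrand_neg measurableSet_Ioo (by simp) (by simp) (by fun_prop)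
      (pow_pos hσmin 2) fun t ht => ?_
    have hσt := pow_le_pow_left₀ hσmin.le (hbound t ht).1 2
    linarith [sq_nonneg σ]
  refine ⟨hκneg, fun S _ hS => ⟨?_, fun Q hQ => ?_⟩⟩
  · simp only [mul_le_mul_left_of_neg hκneg]
    exact setOf_maximizers_trace_proj hE hS
  · rw [trace_proj_mul_mul_transpose_mul hE hQ]

/-- The time-averaged coefficient
`κ = ∫₀¹ [1/((σ² + σ_t²)²(σ² + σ_t² + 1)²) − 2/((σ² + σ_t²)²(σ² + σ_t² + 1))] dt`
is strictly negative, and for any fixed `r × r` symmetric positive definite `S`, the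
function `U ↦ κ·tr(E Eᵀ U S Uᵀ)` over `{U : Uᵀ U = I_r}` is minimized exactly on
`{E Q : Q orthogonal}`, where it takes the value `κ·tr(S)`. -/
theorem kappa_neg_and_minimizers {d r : ℕ} (hd : 0 < d) (hr : 0 < r) (hrd : r < d)
    (E : Matrix (Fin d) (Fin r) ℝ) (hE : Eᵀ * E = 1)
    (σ : ℝ) (hσ : 0 < σ)
    (σt : ℝ → ℝ) (hmeas : Measurable σt)
    (σmin σmax : ℝ) (hσmin : 0 < σmin)
    (hbound : ∀ t ∈ Set.Ioo (0 : ℝ) 1, σmin ≤ σt t ∧ σt t ≤ σmax)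
    (κ : ℝ)
    (hκ : κ = ∫ t in Set.Ioo (0 : ℝ) 1,
      (1 / ((σ ^ 2 + (σt t) ^ 2) ^ 2 * (σ ^ 2 + (σt t) ^ 2 + 1) ^ 2) -
        2 / ((σ ^ 2 + (σt t) ^ 2) ^ 2 * (σ ^ 2 + (σt t) ^ 2 + 1)))) :
    κ < 0 ∧
      ∀ S : Matrix (Fin r) (Fin r) ℝ, S.IsSymm → S.PosDef →
        ({U : Matrix (Fin d) (Fin r) ℝ | Uᵀ * U = 1 ∧
            ∀ W : Matrix (Fin d) (Fin r) ℝ, Wᵀ * W = 1 →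
              κ * (E * Eᵀ * U * S * Uᵀ).trace ≤ κ * (E * Eᵀ * W * S * Wᵀ).trace} =
          {U : Matrix (Fin d) (Fin r) ℝ |
            ∃ Q : Matrix (Fin r) (Fin r) ℝ, Qᵀ * Q = 1 ∧ U = E * Q}) ∧
        ∀ Q : Matrix (Fin r) (Fin r) ℝ, Qᵀ * Q = 1 →
          κ * (E * Eᵀ * (E * Q) * S * (E * Q)ᵀ).trace = κ * S.trace :=
  kappa_neg_and_minimizers_general E hE σ σt hmeas σmin σmax hσmin hbound κ hκ
end
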